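/- Let u ∈ H¹_μ and let v, w ∈ Γ(u) be two μ-gradients of u. Then for μ-almost every x ∈ Ω, the orthogonal projections of v(x) and w(x) onto T_μ(x) coincide; in other words the map x ↦ p_{T_μ(x)}(v(x)) does not depend on the choice of the gradient v ∈ Γ(u), and it equals the tangential gradient ∇_μ u (the element of Γ(u) of minimal L²(μ)-norm) μ-almost everywhere. -/

import Mathlib

open MeasureTheory Filter Set
open scoped ENNReal RealInnerProductSpace

/-- The gradient of a smooth function on `EuclideanSpace ℝ (Fin d)`. -/
noncomputable def euclGrad {d : ℕ} (u : EuclideanSpace ℝ (Fin d) → ℝ)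
    (x : EuclideanSpace ℝ (Fin d)) : EuclideanSpace ℝ (Fin d) :=
  WithLp.toLp 2 (fun i => fderiv ℝ u x (EuclideanSpace.single i 1))

/-- `v ∈ Γ(u)`: there is a sequence of smooth functions `Uₙ` with `Uₙ → u` in `L²(μ)` and
`∇Uₙ → v` in `L²(μ; ℝᵈ)`. -/
def InGamma {d : ℕ} (μ : Measure (EuclideanSpace ℝ (Fin d)))
    (u : EuclideanSpace ℝ (Fin d) → ℝ)
    (v : EuclideanSpace ℝ (Fin d) → EuclideanSpace ℝ (Fin d)) : Prop :=
  ∃ U : ℕ → EuclideanSpace ℝ (Fin d) → ℝ, (∀ n, ContDiff ℝ (⊤ : ℕ∞) (U n)) ∧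
    Tendsto (fun n => eLpNorm (fun x => U n x - u x) 2 μ) atTop (nhds 0) ∧
    Tendsto (fun n => eLpNorm (fun x => euclGrad (U n) x - v x) 2 μ) atTop (nhds 0)

/-- `ξ i` is (a representative of) the orthogonal projection in `L²(μ; ℝᵈ)` of the constant
function `eᵢ` onto the closed subspace `Γ(0)`: it belongs to `Γ(0)` and `eᵢ - ξᵢ ⊥ Γ(0)`. -/
def IsXi {d : ℕ} (μ : Measure (EuclideanSpace ℝ (Fin d)))
    (ξ : Fin d → EuclideanSpace ℝ (Fin d) → EuclideanSpace ℝ (Fin d)) : Prop :=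
  ∀ i, MemLp (ξ i) 2 μ ∧ InGamma μ 0 (ξ i) ∧
    ∀ w, MemLp w 2 μ → InGamma μ 0 w →
      ∫ x, ⟪EuclideanSpace.single i 1 - ξ i x, w x⟫ ∂μ = 0

/-- The tangent space `T_μ(x) = (span{ξ₁(x),…,ξ_d(x)})ᗮ`. -/
noncomputable def tangentSpace {d : ℕ} (ξ : Fin d → EuclideanSpace ℝ (Fin d) → EuclideanSpace ℝ (Fin d))
    (x : EuclideanSpace ℝ (Fin d)) : Submodule ℝ (EuclideanSpace ℝ (Fin d)) :=
  (Submodule.span ℝ (Set.range fun i => ξ i x))ᗮ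

open scoped NNReal


section helpers
variable {α F : Type*} [MeasurableSpace α] [NormedAddCommGroup F] [NormedSpace ℝ F]
  {μ : Measure α}
set_option linter.unusedSectionVars false


variable {α F : Type*} [MeasurableSpace α] [NormedAddCommGroup F] [NormedSpace ℝ F]
  {μ : Measure α}

lemma tendsto_eLpNorm_add_zero {f g : ℕ → α → F}
    (hf_m : ∀ n, AEStronglyMeasurable (f n) μ) (hg_m : ∀ n, AEStronglyMeasurable (g n) μ)
    (hf : Tendsto (fun n => eLpNorm (f n) 2 μ) atTop (nhds 0))
    (hg : Tendsto (fun n => eLpNorm (g n) 2 μ) atTop (nhds 0)) :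
    Tendsto (fun n => eLpNorm (fun x => f n x + g n x) 2 μ) atTop (nhds 0) := by
  have h : ∀ n, eLpNorm (fun x => f n x + g n x) 2 μ ≤ eLpNorm (f n) 2 μ + eLpNorm (g n) 2 μ :=
    fun n => eLpNorm_add_le (hf_m n) (hg_m n) one_le_two
  have hsum : Tendsto (fun n => eLpNorm (f n) 2 μ + eLpNorm (g n) 2 μ) atTop (nhds 0) := by
    simpa using hf.add hg
  exact tendsto_of_tendsto_of_tendsto_of_le_of_le tendsto_const_nhds hsum
    (fun n => zero_le) h

lemma tendsto_eLpNorm_smul_zero {φ : α → ℝ} {C : ℝ≥0} (hφ : ∀ᵐ x ∂μ, ‖φ x‖₊ ≤ C)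
    {f : ℕ → α → F}
    (hf : Tendsto (fun n => eLpNorm (f n) 2 μ) atTop (nhds 0)) :
    Tendsto (fun n => eLpNorm (fun x => φ x • f n x) 2 μ) atTop (nhds 0) := by
  have h : ∀ n, eLpNorm (fun x => φ x • f n x) 2 μ ≤ C • eLpNorm (f n) 2 μ := fun n =>
    eLpNorm_le_nnreal_smul_eLpNorm_of_ae_le_mul (hφ.mono fun x hx => by
      rw [nnnorm_smul]
      exact mul_le_mul_of_nonneg_right hx zero_le) 2
  have hsum : Tendsto (fun n => (C : ℝ≥0∞) * eLpNorm (f n) 2 μ) atTop (nhds 0) := by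
    simpa using ENNReal.Tendsto.const_mul hf (Or.inr ENNReal.coe_ne_top)
  exact tendsto_of_tendsto_of_tendsto_of_le_of_le tendsto_const_nhds hsum
    (fun n => zero_le) (fun n => by simpa [ENNReal.smul_def] using h n)

lemma tendsto_eLpNorm_smul_zero' {b : α → F} {C : ℝ≥0} (hb : ∀ᵐ x ∂μ, ‖b x‖₊ ≤ C)
    {f : ℕ → α → ℝ}
    (hf : Tendsto (fun n => eLpNorm (f n) 2 μ) atTop (nhds 0)) :
    Tendsto (fun n => eLpNorm (fun x => f n x • b x) 2 μ) atTop (nhds 0) := by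
  have h : ∀ n, eLpNorm (fun x => f n x • b x) 2 μ ≤ C • eLpNorm (f n) 2 μ := fun n =>
    eLpNorm_le_nnreal_smul_eLpNorm_of_ae_le_mul (hb.mono fun x hx => by
      rw [nnnorm_smul, mul_comm]
      exact mul_le_mul_of_nonneg_right hx zero_le) 2
  have hsum : Tendsto (fun n => (C : ℝ≥0∞) * eLpNorm (f n) 2 μ) atTop (nhds 0) := by
    simpa using ENNReal.Tendsto.const_mul hf (Or.inr ENNReal.coe_ne_top)
  exact tendsto_of_tendsto_of_tendsto_of_le_of_le tendsto_const_nhds hsum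
    (fun n => zero_le) (fun n => by simpa [ENNReal.smul_def] using h n)

end helpers

section euclgrad
variable {d : ℕ}


lemma euclGrad_sub {f g : EuclideanSpace ℝ (Fin d) → ℝ} (hf : Differentiable ℝ f)
    (hg : Differentiable ℝ g) (x : EuclideanSpace ℝ (Fin d)) :
    euclGrad (fun y => f y - g y) x = euclGrad f x - euclGrad g x := by
  ext i
  simp [euclGrad, fderiv_fun_sub (hf x) (hg x)]

lemma euclGrad_add {f g : EuclideanSpace ℝ (Fin d) → ℝ} (hf : Differentiable ℝ f)
    (hg : Differentiable ℝ g) (x : EuclideanSpace ℝ (Fin d)) :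
    euclGrad (fun y => f y + g y) x = euclGrad f x + euclGrad g x := by
  ext i
  simp [euclGrad, fderiv_fun_add (hf x) (hg x)]

lemma euclGrad_const_smul {f : EuclideanSpace ℝ (Fin d) → ℝ} (hf : Differentiable ℝ f) (t : ℝ)
    (x : EuclideanSpace ℝ (Fin d)) :
    euclGrad (fun y => t * f y) x = t • euclGrad f x := by
  ext i
  simp [euclGrad, fderiv_const_mul (hf x) t]

lemma euclGrad_mul {f g : EuclideanSpace ℝ (Fin d) → ℝ} (hf : Differentiable ℝ f)
    (hg : Differentiable ℝ g) (x : EuclideanSpace ℝ (Fin d)) :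
    euclGrad (fun y => f y * g y) x = f x • euclGrad g x + g x • euclGrad f x := by
  ext i
  simp [euclGrad, fderiv_fun_mul (hf x) (hg x)]

lemma euclGrad_continuous {f : EuclideanSpace ℝ (Fin d) → ℝ} (hf : ContDiff ℝ (⊤ : ℕ∞) f) :
    Continuous (euclGrad f) := by
  unfold euclGrad
  apply (PiLp.continuous_toLp 2 _).comp
  apply continuous_pi
  intro i
  exact (isBoundedBilinearMap_apply.continuous.comp
    ((hf.continuous_fderiv (by simp)).prodMk continuous_const))

end euclgrad

section ingamma
variable {d : ℕ} {μ : Measure (EuclideanSpace ℝ (Fin d))}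
  {u : EuclideanSpace ℝ (Fin d) → ℝ}
  {v w z : EuclideanSpace ℝ (Fin d) → EuclideanSpace ℝ (Fin d)}

lemma inGamma_sub (hum : AEStronglyMeasurable u μ)
    (hvm : AEStronglyMeasurable v μ) (hwm : AEStronglyMeasurable w μ)
    (hv : InGamma μ u v) (hw : InGamma μ u w) :
    InGamma μ 0 (fun x => v x - w x) := by
  obtain ⟨U, hU, hU1, hU2⟩ := hv
  obtain ⟨V, hV, hV1, hV2⟩ := hw
  refine ⟨fun n x => U n x - V n x, fun n => (hU n).sub (hV n), ?_, ?_⟩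
  · have hg : Tendsto (fun n => eLpNorm (fun x => u x - V n x) 2 μ) atTop (nhds 0) :=
      hV1.congr fun n => (eLpNorm_sub_comm (V n) u 2 μ)
    have := tendsto_eLpNorm_add_zero (f := fun n x => U n x - u x) (g := fun n x => u x - V n x)
      (fun n => ((hU n).continuous.aestronglyMeasurable).sub hum)
      (fun n => hum.sub (hV n).continuous.aestronglyMeasurable) hU1 hg
    refine this.congr fun n => ?_
    apply eLpNorm_congr_ae
    filter_upwards with x
    simp only [Pi.zero_apply]
    ring
  · have key : ∀ n x, euclGrad (fun y => U n y - V n y) x - (v x - w x)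
        = (euclGrad (U n) x - v x) + (w x - euclGrad (V n) x) := by
      intro n x
      rw [euclGrad_sub ((hU n).differentiable (by simp)) ((hV n).differentiable (by simp)),
        sub_sub_sub_comm, sub_eq_add_neg (euclGrad (U n) x - v x), neg_sub]
    have hg : Tendsto (fun n => eLpNorm (fun x => w x - euclGrad (V n) x) 2 μ) atTop
        (nhds 0) := by
      refine hV2.congr fun n => ?_
      rw [show (fun x => euclGrad (V n) x - w x)
          = -(fun x => w x - euclGrad (V n) x) by funext x; simp, eLpNorm_neg]
    have := tendsto_eLpNorm_add_zero
      (f := fun n x => euclGrad (U n) x - v x) (g := fun n x => w x - euclGrad (V n) x)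
      (fun n => ((euclGrad_continuous (hU n)).aestronglyMeasurable).sub hvm)
      (fun n => hwm.sub (euclGrad_continuous (hV n)).aestronglyMeasurable) hU2 hg
    refine this.congr fun n => ?_
    apply eLpNorm_congr_ae
    filter_upwards with x
    rw [← key]

lemma inGamma_add_smul (hum : AEStronglyMeasurable u μ)
    (hvm : AEStronglyMeasurable v μ) (hzm : AEStronglyMeasurable z μ)
    (hv : InGamma μ u v) (hz : InGamma μ 0 z) (t : ℝ) :
    InGamma μ u (fun x => v x + t • z x) := by
  obtain ⟨U, hU, hU1, hU2⟩ := hv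
  obtain ⟨W, hW, hW1, hW2⟩ := hz
  refine ⟨fun n x => U n x + t * W n x, fun n => (hU n).add (contDiff_const.mul (hW n)), ?_, ?_⟩
  · have hW1' : Tendsto (fun n => eLpNorm (W n) 2 μ) atTop (nhds 0) := by
      refine hW1.congr fun n => ?_
      apply eLpNorm_congr_ae; filter_upwards with x; simp
    have hg : Tendsto (fun n => eLpNorm (fun x => (t : ℝ) • W n x) 2 μ) atTop (nhds 0) :=
      tendsto_eLpNorm_smul_zero (φ := fun _ => t) (C := ‖t‖₊) (Filter.Eventually.of_forall fun x => le_rfl) hW1'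
    have := tendsto_eLpNorm_add_zero (f := fun n x => U n x - u x) (g := fun n x => t • W n x)
      (fun n => ((hU n).continuous.aestronglyMeasurable).sub hum)
      (fun n => ((hW n).continuous.aestronglyMeasurable).const_smul t) hU1 hg
    refine this.congr fun n => ?_
    apply eLpNorm_congr_ae
    filter_upwards with x
    simp only [smul_eq_mul]
    ring
  · have key : ∀ n x, euclGrad (fun y => U n y + t * W n y) x - (v x + t • z x)
        = (euclGrad (U n) x - v x) + t • (euclGrad (W n) x - z x) := by
      intro n x
      rw [euclGrad_add ((hU n).differentiable (by simp))
        ((contDiff_const.mul (hW n)).differentiable (by simp)),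
        euclGrad_const_smul ((hW n).differentiable (by simp)), smul_sub, add_sub_add_comm]
    have hW2' : Tendsto (fun n => eLpNorm (fun x => euclGrad (W n) x - z x) 2 μ) atTop (nhds 0) :=
      hW2
    have hg : Tendsto (fun n => eLpNorm (fun x => (t : ℝ) • (euclGrad (W n) x - z x)) 2 μ)
        atTop (nhds 0) :=
      tendsto_eLpNorm_smul_zero (φ := fun _ => t) (C := ‖t‖₊) (Filter.Eventually.of_forall fun x => le_rfl) hW2'
    have := tendsto_eLpNorm_add_zero
      (f := fun n x => euclGrad (U n) x - v x)
      (g := fun n x => t • (euclGrad (W n) x - z x))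
      (fun n => ((euclGrad_continuous (hU n)).aestronglyMeasurable).sub hvm)
      (fun n => (((euclGrad_continuous (hW n)).aestronglyMeasurable).sub hzm).const_smul t)
      hU2 hg
    refine this.congr fun n => ?_
    apply eLpNorm_congr_ae
    filter_upwards with x
    rw [← key]

end ingamma

section testing
variable {d : ℕ}

/-- The subalgebra of `C(K, ℝ)` consisting of restrictions of entire (`C^ω`) functions. -/
noncomputable def analyticRestrict (K : Set (EuclideanSpace ℝ (Fin d))) : Subalgebra ℝ C(K, ℝ) where
  carrier := {f | ∃ g : EuclideanSpace ℝ (Fin d) → ℝ, ContDiff ℝ (⊤ : ℕ∞) g ∧ ∀ x : K, f x = g x}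
  mul_mem' := by
    rintro f1 f2 ⟨g1, h1, e1⟩ ⟨g2, h2, e2⟩
    exact ⟨fun x => g1 x * g2 x, h1.mul h2, fun x => by simp [e1 x, e2 x]⟩
  add_mem' := by
    rintro f1 f2 ⟨g1, h1, e1⟩ ⟨g2, h2, e2⟩
    exact ⟨fun x => g1 x + g2 x, h1.add h2, fun x => by simp [e1 x, e2 x]⟩
  algebraMap_mem' := fun c => ⟨fun _ => c, contDiff_const, fun x => rfl⟩

lemma analyticRestrict_separates (K : Set (EuclideanSpace ℝ (Fin d))) :
    (analyticRestrict K).SeparatesPoints := by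
  intro x y hxy
  have : (x : EuclideanSpace ℝ (Fin d)) ≠ (y : EuclideanSpace ℝ (Fin d)) := Subtype.coe_ne_coe.mpr hxy
  obtain ⟨i, hi⟩ : ∃ i, (x : EuclideanSpace ℝ (Fin d)) i ≠ (y : EuclideanSpace ℝ (Fin d)) i := by
    by_contra h
    push_neg at h
    exact this (by ext i; exact h i)
  refine ⟨_, ⟨ContinuousMap.restrict K ⟨fun v => v i, by fun_prop⟩,
    ⟨fun v => v i, (EuclideanSpace.proj i : EuclideanSpace ℝ (Fin d) →L[ℝ] ℝ).contDiff, fun x => rfl⟩, rfl⟩, ?_⟩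
  simpa using hi

/-- If an integrable function integrates to zero against every entire function, it vanishes
`μ`-a.e. (for a finite measure concentrated on a bounded set). -/
lemma ae_zero_of_forall_analytic {Ω : Set (EuclideanSpace ℝ (Fin d))}
    (hΩbdd : Bornology.IsBounded Ω)
    {μ : Measure (EuclideanSpace ℝ (Fin d))} [IsFiniteMeasure μ] (hμΩ : μ Ωᶜ = 0)
    {g : EuclideanSpace ℝ (Fin d) → ℝ} (hg : Integrable g μ)
    (h : ∀ φ : EuclideanSpace ℝ (Fin d) → ℝ, ContDiff ℝ (⊤ : ℕ∞) φ → ∫ x, φ x * g x ∂μ = 0) :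
    ∀ᵐ x ∂μ, g x = 0 := by
  apply ae_eq_zero_of_integral_contDiff_smul_eq_zero hg.locallyIntegrable
  intro ψ hψ hψc
  -- the set where the measure lives
  set K : Set (EuclideanSpace ℝ (Fin d)) := closure Ω with hK
  have hKc : IsCompact K := hΩbdd.isCompact_closure
  haveI : CompactSpace K := isCompact_iff_compactSpace.mp hKc
  have hμK : μ Kᶜ = 0 :=
    measure_mono_null (Set.compl_subset_compl.mpr subset_closure) hμΩ
  have haeK : ∀ᵐ x ∂μ, x ∈ K := by
    rw [ae_iff]
    exact hμK
  -- it suffices to show the integral is arbitrarily small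
  have key : ∀ ε : ℝ, 0 < ε → ‖∫ x, ψ x • g x ∂μ‖ ≤ ε * ∫ x, ‖g x‖ ∂μ := by
    intro ε hε
    obtain ⟨φ₀, hφ₀⟩ := ContinuousMap.exists_mem_subalgebra_near_continuous_of_separatesPoints
      (analyticRestrict K) (analyticRestrict_separates K) (fun x : K => ψ x)
      (hψ.continuous.comp continuous_subtype_val) ε hε
    obtain ⟨φ, hφa, hφe⟩ := φ₀.2
    -- φ is analytic and `|φ - ψ| ≤ ε` on K
    have hbd : ∀ x ∈ K, ‖φ x - ψ x‖ ≤ ε := by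
      intro x hx
      have := hφ₀ ⟨x, hx⟩
      rw [hφe ⟨x, hx⟩] at this
      exact this.le
    -- integrability of φ * g and ψ * g
    obtain ⟨Cφ, hCφ⟩ := hKc.exists_bound_of_continuousOn (hφa.continuous.continuousOn)
    have hint1 : Integrable (fun x => φ x * g x) μ := by
      refine Integrable.mono' (hg.norm.const_mul (max Cφ 0))
        (hφa.continuous.aestronglyMeasurable.mul hg.aestronglyMeasurable) ?_
      filter_upwards [haeK] with x hx
      rw [norm_mul]
      exact mul_le_mul_of_nonneg_right ((hCφ x hx).trans (le_max_left _ _)) (norm_nonneg _)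
    have hint2 : Integrable (fun x => ψ x * g x) μ := by
      obtain ⟨Cψ, hCψ⟩ := hψ.continuous.bounded_above_of_compact_support hψc
      refine Integrable.mono' (hg.norm.const_mul Cψ)
        (hψ.continuous.aestronglyMeasurable.mul hg.aestronglyMeasurable) ?_
      filter_upwards with x
      rw [norm_mul]
      exact mul_le_mul_of_nonneg_right (hCψ x) (norm_nonneg _)
    have hzero := h φ hφa
    have : (∫ x, ψ x • g x ∂μ) = ∫ x, (ψ x - φ x) * g x ∂μ := by
      rw [show (fun x => (ψ x - φ x) * g x) = fun x => ψ x * g x - φ x * g x by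
        funext x; ring]
      rw [integral_sub hint2 hint1, hzero, sub_zero]
      simp [smul_eq_mul]
    rw [this]
    calc ‖∫ x, (ψ x - φ x) * g x ∂μ‖ ≤ ∫ x, ‖(ψ x - φ x) * g x‖ ∂μ :=
          norm_integral_le_integral_norm _
      _ ≤ ∫ x, ε * ‖g x‖ ∂μ := by
          have hint3 : Integrable (fun x => ‖(ψ x - φ x) * g x‖) μ := by
            have he : (fun x => ‖(ψ x - φ x) * g x‖) = fun x => ‖ψ x * g x - φ x * g x‖ := by
              funext x; rw [sub_mul]
            rw [he]; exact (hint2.sub hint1).norm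
          refine integral_mono_ae hint3 (hg.norm.const_mul ε) ?_
          filter_upwards [haeK] with x hx
          rw [norm_mul]
          refine mul_le_mul_of_nonneg_right ?_ (norm_nonneg _)
          have := hbd x hx
          rwa [norm_sub_rev] at this
      _ = ε * ∫ x, ‖g x‖ ∂μ := integral_const_mul _ _
  -- conclude
  have hnonneg : (0:ℝ) ≤ ∫ x, ‖g x‖ ∂μ := integral_nonneg fun x => norm_nonneg _
  by_contra hne
  have hpos : 0 < ‖∫ x, ψ x • g x ∂μ‖ := norm_pos_iff.mpr hne
  set a := ‖∫ x, ψ x • g x ∂μ‖ with ha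
  set c := ∫ x, ‖g x‖ ∂μ with hc
  have hkey := key (a / (c + 1)) (by positivity)
  rw [div_mul_eq_mul_div] at hkey
  have h2 : a * (c + 1) ≤ a * c := (le_div_iff₀ (by positivity)).mp hkey
  nlinarith

end testing

section level2
variable {d : ℕ} {μ : Measure (EuclideanSpace ℝ (Fin d))}

lemma memLp_inner_integrable {f g : EuclideanSpace ℝ (Fin d) → EuclideanSpace ℝ (Fin d)}
    (hf : MemLp f 2 μ) (hg : MemLp g 2 μ) :
    Integrable (fun x => ⟪f x, g x⟫) μ := by
  have := MeasureTheory.L2.integrable_inner (𝕜 := ℝ) (hf.toLp f) (hg.toLp g)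
  refine this.congr ?_
  filter_upwards [hf.coeFn_toLp, hg.coeFn_toLp] with x h1 h2
  rw [h1, h2]

lemma nnnorm_le_toNNReal {a : ℝ} {C : ℝ} (h : ‖a‖ ≤ C) : ‖a‖₊ ≤ C.toNNReal := by
  rw [← norm_toNNReal]
  exact Real.toNNReal_mono h

lemma nnnorm_le_toNNReal' {a : EuclideanSpace ℝ (Fin d)} {C : ℝ} (h : ‖a‖ ≤ C) :
    ‖a‖₊ ≤ C.toNNReal := by
  rw [← norm_toNNReal]
  exact Real.toNNReal_mono h

/-- `Γ(0)` is stable under multiplication by an entire function which is bounded,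
with bounded gradient, `μ`-a.e. -/
lemma inGamma_smul_analytic {φ : EuclideanSpace ℝ (Fin d) → ℝ}
    {z : EuclideanSpace ℝ (Fin d) → EuclideanSpace ℝ (Fin d)}
    (hφ : ContDiff ℝ (⊤ : ℕ∞) φ) {C₁ C₂ : ℝ≥0}
    (hφb : ∀ᵐ x ∂μ, ‖φ x‖₊ ≤ C₁) (hφb' : ∀ᵐ x ∂μ, ‖euclGrad φ x‖₊ ≤ C₂)
    (hzm : AEStronglyMeasurable z μ) (hz : InGamma μ 0 z) :
    InGamma μ 0 (fun x => φ x • z x) := by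
  obtain ⟨W, hW, hW1, hW2⟩ := hz
  have hW1' : Tendsto (fun n => eLpNorm (W n) 2 μ) atTop (nhds 0) := by
    refine hW1.congr fun n => ?_
    apply eLpNorm_congr_ae; filter_upwards with x; simp
  refine ⟨fun n x => φ x * W n x, fun n => hφ.mul (hW n), ?_, ?_⟩
  · have := tendsto_eLpNorm_smul_zero (f := fun n x => W n x) hφb hW1'
    refine this.congr fun n => ?_
    apply eLpNorm_congr_ae
    filter_upwards with x
    simp [smul_eq_mul]
  · have key : ∀ n x, euclGrad (fun y => φ y * W n y) x - φ x • z x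
        = φ x • (euclGrad (W n) x - z x) + W n x • euclGrad φ x := by
      intro n x
      rw [euclGrad_mul (hφ.differentiable (by simp)) ((hW n).differentiable (by simp)),
        smul_sub, add_sub_right_comm]
    have h1 := tendsto_eLpNorm_smul_zero
      (f := fun n x => euclGrad (W n) x - z x) hφb hW2
    have h2 := tendsto_eLpNorm_smul_zero' (f := fun n x => W n x) hφb' hW1'
    have := tendsto_eLpNorm_add_zero
      (f := fun n x => φ x • (euclGrad (W n) x - z x))
      (g := fun n x => W n x • euclGrad φ x)
      (fun n => (hφ.continuous.aestronglyMeasurable.smul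
        (((euclGrad_continuous (hW n)).aestronglyMeasurable).sub hzm)))
      (fun n => ((hW n).continuous.aestronglyMeasurable.smul
        (euclGrad_continuous hφ).aestronglyMeasurable)) h1 h2
    refine this.congr fun n => ?_
    apply eLpNorm_congr_ae
    filter_upwards with x
    rw [← key]

end level2

section level3
variable {d : ℕ} {μ : Measure (EuclideanSpace ℝ (Fin d))}
  {Ω : Set (EuclideanSpace ℝ (Fin d))}

lemma ae_inner_sub_xi_eq_zero [IsFiniteMeasure μ] (hΩbdd : Bornology.IsBounded Ω)
    (hμΩ : μ Ωᶜ = 0)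
    {ξ : Fin d → EuclideanSpace ℝ (Fin d) → EuclideanSpace ℝ (Fin d)} (hξ : IsXi μ ξ)
    {z : EuclideanSpace ℝ (Fin d) → EuclideanSpace ℝ (Fin d)}
    (hzL2 : MemLp z 2 μ) (hz : InGamma μ 0 z) (i : Fin d) :
    ∀ᵐ x ∂μ, ⟪EuclideanSpace.single i 1 - ξ i x, z x⟫ = 0 := by
  have hKc : IsCompact (closure Ω) := hΩbdd.isCompact_closure
  have haeK : ∀ᵐ x ∂μ, x ∈ closure Ω := by
    rw [ae_iff]
    exact measure_mono_null (Set.compl_subset_compl.mpr subset_closure) hμΩ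
  have hgint : Integrable (fun x => ⟪EuclideanSpace.single i 1 - ξ i x, z x⟫) μ :=
    memLp_inner_integrable ((memLp_const _).sub (hξ i).1) hzL2
  apply ae_zero_of_forall_analytic hΩbdd hμΩ hgint
  intro φ hφ
  obtain ⟨C₁, hC₁⟩ := hKc.exists_bound_of_continuousOn hφ.continuous.continuousOn
  obtain ⟨C₂, hC₂⟩ := hKc.exists_bound_of_continuousOn (euclGrad_continuous hφ).continuousOn
  have hφb : ∀ᵐ x ∂μ, ‖φ x‖₊ ≤ C₁.toNNReal := by
    filter_upwards [haeK] with x hx; exact nnnorm_le_toNNReal (hC₁ x hx)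
  have hφb' : ∀ᵐ x ∂μ, ‖euclGrad φ x‖₊ ≤ C₂.toNNReal := by
    filter_upwards [haeK] with x hx; exact nnnorm_le_toNNReal' (hC₂ x hx)
  have hmem : InGamma μ 0 (fun x => φ x • z x) :=
    inGamma_smul_analytic hφ hφb hφb' hzL2.1 hz
  have hL2 : MemLp (fun x => φ x • z x) 2 μ := by
    refine MemLp.of_le_mul (c := C₁) hzL2 (hφ.continuous.aestronglyMeasurable.smul hzL2.1) ?_
    filter_upwards [haeK] with x hx
    rw [norm_smul]
    exact mul_le_mul_of_nonneg_right (hC₁ x hx) (norm_nonneg _)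
  have h0 := (hξ i).2.2 _ hL2 hmem
  rw [← h0]
  apply integral_congr_ae
  filter_upwards with x
  rw [real_inner_smul_right]

lemma integral_inner_gradu_zero [IsFiniteMeasure μ]
    {u : EuclideanSpace ℝ (Fin d) → ℝ} (hu : MemLp u 2 μ)
    {gradu : EuclideanSpace ℝ (Fin d) → EuclideanSpace ℝ (Fin d)}
    (hgrad : MemLp gradu 2 μ) (hgradΓ : InGamma μ u gradu)
    (hmin : ∀ z, MemLp z 2 μ → InGamma μ u z →
      ∫ x, ‖gradu x‖ ^ 2 ∂μ ≤ ∫ x, ‖z x‖ ^ 2 ∂μ)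
    {z : EuclideanSpace ℝ (Fin d) → EuclideanSpace ℝ (Fin d)}
    (hzL2 : MemLp z 2 μ) (hz : InGamma μ 0 z) :
    ∫ x, ⟪gradu x, z x⟫ ∂μ = 0 := by
  set a := ∫ x, ⟪gradu x, z x⟫ ∂μ with ha
  set b := ∫ x, ‖z x‖ ^ 2 ∂μ with hb
  have hbnn : 0 ≤ b := integral_nonneg fun x => sq_nonneg _
  have hint1 : Integrable (fun x => ‖gradu x‖ ^ 2) μ :=
    (memLp_two_iff_integrable_sq_norm hgrad.1).mp hgrad
  have hint2 : Integrable (fun x => ⟪gradu x, z x⟫) μ := memLp_inner_integrable hgrad hzL2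
  have hint3 : Integrable (fun x => ‖z x‖ ^ 2) μ :=
    (memLp_two_iff_integrable_sq_norm hzL2.1).mp hzL2
  have hineq : ∀ t : ℝ, 0 ≤ 2 * t * a + t ^ 2 * b := by
    intro t
    have hmem := inGamma_add_smul hu.1 hgrad.1 hzL2.1 hgradΓ hz t
    have hL2 : MemLp (fun x => gradu x + t • z x) 2 μ := hgrad.add (hzL2.const_smul t)
    have h := hmin _ hL2 hmem
    have hexp : ∫ x, ‖gradu x + t • z x‖ ^ 2 ∂μ
        = ∫ x, ‖gradu x‖ ^ 2 ∂μ + (2 * t * a + t ^ 2 * b) := by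
      have hptw : ∀ x, ‖gradu x + t • z x‖ ^ 2
          = ‖gradu x‖ ^ 2 + (2 * t * ⟪gradu x, z x⟫ + t ^ 2 * ‖z x‖ ^ 2) := by
        intro x
        rw [norm_add_sq_real, real_inner_smul_right, norm_smul, mul_pow]
        simp only [Real.norm_eq_abs, sq_abs]
        ring
      have hg3 : Integrable (fun x => 2 * t * ⟪gradu x, z x⟫) μ := hint2.const_mul _
      have hg4 : Integrable (fun x => t ^ 2 * ‖z x‖ ^ 2) μ := hint3.const_mul _
      have hg2 : Integrable (fun x => 2 * t * ⟪gradu x, z x⟫ + t ^ 2 * ‖z x‖ ^ 2) μ :=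
        hg3.add hg4
      rw [integral_congr_ae (Filter.Eventually.of_forall hptw),
        integral_add hint1 hg2, integral_add hg3 hg4,
        integral_const_mul, integral_const_mul]
    rw [hexp] at h
    linarith
  have h := hineq (-(a / (b + 1)))
  have hb1 : (0:ℝ) < b + 1 := by linarith
  have h2 : 0 ≤ (2 * (-(a / (b + 1))) * a + (-(a / (b + 1))) ^ 2 * b) * (b + 1) ^ 2 :=
    mul_nonneg h (by positivity)
  have h3 : (2 * (-(a / (b + 1))) * a + (-(a / (b + 1))) ^ 2 * b) * (b + 1) ^ 2
      = -2 * a ^ 2 * (b + 1) + a ^ 2 * b := by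
    field_simp
  have h4 : a ^ 2 * (b + 2) ≤ 0 := by nlinarith
  have h5 : a ^ 2 ≤ 0 := by nlinarith
  exact sq_eq_zero_iff.mp (le_antisymm h5 (sq_nonneg a))

lemma ae_inner_xi_gradu_eq_zero [IsFiniteMeasure μ] (hΩbdd : Bornology.IsBounded Ω)
    (hμΩ : μ Ωᶜ = 0)
    {ξ : Fin d → EuclideanSpace ℝ (Fin d) → EuclideanSpace ℝ (Fin d)} (hξ : IsXi μ ξ)
    {u : EuclideanSpace ℝ (Fin d) → ℝ} (hu : MemLp u 2 μ)
    {gradu : EuclideanSpace ℝ (Fin d) → EuclideanSpace ℝ (Fin d)}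
    (hgrad : MemLp gradu 2 μ) (hgradΓ : InGamma μ u gradu)
    (hmin : ∀ z, MemLp z 2 μ → InGamma μ u z →
      ∫ x, ‖gradu x‖ ^ 2 ∂μ ≤ ∫ x, ‖z x‖ ^ 2 ∂μ) (i : Fin d) :
    ∀ᵐ x ∂μ, ⟪ξ i x, gradu x⟫ = 0 := by
  have hKc : IsCompact (closure Ω) := hΩbdd.isCompact_closure
  have haeK : ∀ᵐ x ∂μ, x ∈ closure Ω := by
    rw [ae_iff]
    exact measure_mono_null (Set.compl_subset_compl.mpr subset_closure) hμΩ
  have hgint : Integrable (fun x => ⟪ξ i x, gradu x⟫) μ :=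
    memLp_inner_integrable (hξ i).1 hgrad
  apply ae_zero_of_forall_analytic hΩbdd hμΩ hgint
  intro φ hφ
  obtain ⟨C₁, hC₁⟩ := hKc.exists_bound_of_continuousOn hφ.continuous.continuousOn
  obtain ⟨C₂, hC₂⟩ := hKc.exists_bound_of_continuousOn (euclGrad_continuous hφ).continuousOn
  have hφb : ∀ᵐ x ∂μ, ‖φ x‖₊ ≤ C₁.toNNReal := by
    filter_upwards [haeK] with x hx; exact nnnorm_le_toNNReal (hC₁ x hx)
  have hφb' : ∀ᵐ x ∂μ, ‖euclGrad φ x‖₊ ≤ C₂.toNNReal := by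
    filter_upwards [haeK] with x hx; exact nnnorm_le_toNNReal' (hC₂ x hx)
  have hmem : InGamma μ 0 (fun x => φ x • ξ i x) :=
    inGamma_smul_analytic hφ hφb hφb' (hξ i).1.1 (hξ i).2.1
  have hL2 : MemLp (fun x => φ x • ξ i x) 2 μ := by
    refine MemLp.of_le_mul (c := C₁) (hξ i).1 (hφ.continuous.aestronglyMeasurable.smul (hξ i).1.1) ?_
    filter_upwards [haeK] with x hx
    rw [norm_smul]
    exact mul_le_mul_of_nonneg_right (hC₁ x hx) (norm_nonneg _)
  have h0 := integral_inner_gradu_zero hu hgrad hgradΓ hmin hL2 hmem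
  rw [← h0]
  apply integral_congr_ae
  filter_upwards with x
  rw [real_inner_smul_right, real_inner_comm]

lemma mem_span_of_inner {ξv : Fin d → EuclideanSpace ℝ (Fin d)} {zv : EuclideanSpace ℝ (Fin d)}
    (h1 : ∀ i, ⟪EuclideanSpace.single i 1 - ξv i, zv⟫ = 0)
    (h2 : ∀ i j, ⟪EuclideanSpace.single i 1 - ξv i, ξv j⟫ = 0) :
    zv ∈ Submodule.span ℝ (Set.range ξv) := by
  have hz : ∀ i, zv i = ⟪ξv i, zv⟫ := by
    intro i
    have h := h1 i
    rw [inner_sub_left, sub_eq_zero] at h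
    rw [← h, EuclideanSpace.inner_single_left]
    simp
  have hsym : ∀ i j, ξv j i = ⟪ξv i, ξv j⟫ := by
    intro i j
    have h := h2 i j
    rw [inner_sub_left, sub_eq_zero] at h
    rw [← h, EuclideanSpace.inner_single_left]
    simp
  have hrepr : zv = ∑ j, zv j • ξv j := by
    ext i
    have hsumap : (∑ j, zv j • ξv j) i = ∑ j, (zv j • ξv j) i :=
      by simp
    rw [hsumap]
    have : ∀ j, (zv j • ξv j) i = zv j * ξv j i := fun j => rfl
    rw [Finset.sum_congr rfl fun j _ => this j]
    have hstep : ∀ j, zv j * ξv j i = ξv i j * zv j := by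
      intro j
      have e : ξv j i = ξv i j := by
        rw [hsym i j, real_inner_comm, ← hsym j i]
      rw [e, mul_comm]
    rw [Finset.sum_congr rfl fun j _ => hstep j]
    have : ∑ j, ξv i j * zv j = ⟪ξv i, zv⟫ := by
      rw [PiLp.inner_apply]
      simp [RCLike.inner_apply, conj_trivial, mul_comm]
    rw [this, ← hz i]
  rw [hrepr]
  exact Submodule.sum_mem _ fun j _ =>
    Submodule.smul_mem _ _ (Submodule.subset_span ⟨j, rfl⟩)

end level3

/-- Pointwise description of the tangential gradient: for `u ∈ H¹_μ`, the projection
`x ↦ p_{T_μ(x)}(v(x))` is independent of the gradient `v ∈ Γ(u)` and equals `∇_μ u`,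
the minimal-norm element of `Γ(u)`, `μ`-a.e. -/
theorem pointwise_description_of_tangential_gradient
    (d : ℕ) (Ω : Set (EuclideanSpace ℝ (Fin d)))
    (hΩopen : IsOpen Ω) (hΩbdd : Bornology.IsBounded Ω)
    (μ : Measure (EuclideanSpace ℝ (Fin d))) [IsFiniteMeasure μ] (hμΩ : μ Ωᶜ = 0)
    (ξ : Fin d → EuclideanSpace ℝ (Fin d) → EuclideanSpace ℝ (Fin d)) (hξ : IsXi μ ξ)
    (u : EuclideanSpace ℝ (Fin d) → ℝ) (hu : MemLp u 2 μ)
    (v w : EuclideanSpace ℝ (Fin d) → EuclideanSpace ℝ (Fin d))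
    (hvL2 : MemLp v 2 μ) (hwL2 : MemLp w 2 μ)
    (hv : InGamma μ u v) (hw : InGamma μ u w)
    (gradu : EuclideanSpace ℝ (Fin d) → EuclideanSpace ℝ (Fin d))
    (hgrad : MemLp gradu 2 μ) (hgradΓ : InGamma μ u gradu)
    (hmin : ∀ z, MemLp z 2 μ → InGamma μ u z →
      ∫ x, ‖gradu x‖ ^ 2 ∂μ ≤ ∫ x, ‖z x‖ ^ 2 ∂μ) :
    ∀ᵐ x ∂μ,
      (Submodule.orthogonalProjectionOnto (tangentSpace ξ x) (v x) : EuclideanSpace ℝ (Fin d)) =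
        (Submodule.orthogonalProjectionOnto (tangentSpace ξ x) (w x) : EuclideanSpace ℝ (Fin d)) ∧
      (Submodule.orthogonalProjectionOnto (tangentSpace ξ x) (v x) : EuclideanSpace ℝ (Fin d)) =
        gradu x := by
  -- differences of gradients belong to Γ(0)
  have hvw : InGamma μ 0 (fun x => v x - w x) := inGamma_sub hu.1 hvL2.1 hwL2.1 hv hw
  have hgv : InGamma μ 0 (fun x => gradu x - v x) :=
    inGamma_sub hu.1 hgrad.1 hvL2.1 hgradΓ hv
  have hvwL2 : MemLp (fun x => v x - w x) 2 μ := hvL2.sub hwL2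
  have hgvL2 : MemLp (fun x => gradu x - v x) 2 μ := hgrad.sub hvL2
  -- the a.e. pointwise orthogonality relations
  have A1 : ∀ᵐ x ∂μ, ∀ i, ⟪EuclideanSpace.single i 1 - ξ i x, v x - w x⟫ = 0 :=
    ae_all_iff.mpr fun i => ae_inner_sub_xi_eq_zero hΩbdd hμΩ hξ hvwL2 hvw i
  have A2 : ∀ᵐ x ∂μ, ∀ i, ⟪EuclideanSpace.single i 1 - ξ i x, gradu x - v x⟫ = 0 :=
    ae_all_iff.mpr fun i => ae_inner_sub_xi_eq_zero hΩbdd hμΩ hξ hgvL2 hgv i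
  have A3 : ∀ᵐ x ∂μ, ∀ i j, ⟪EuclideanSpace.single i 1 - ξ i x, ξ j x⟫ = 0 :=
    ae_all_iff.mpr fun i => ae_all_iff.mpr fun j =>
      ae_inner_sub_xi_eq_zero hΩbdd hμΩ hξ (hξ j).1 (hξ j).2.1 i
  have A4 : ∀ᵐ x ∂μ, ∀ i, ⟪ξ i x, gradu x⟫ = 0 :=
    ae_all_iff.mpr fun i =>
      ae_inner_xi_gradu_eq_zero hΩbdd hμΩ hξ hu hgrad hgradΓ hmin i
  filter_upwards [A1, A2, A3, A4] with x h1 h1' h2 h3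
  -- pointwise conclusions
  have hspan1 : v x - w x ∈ Submodule.span ℝ (Set.range fun i => ξ i x) :=
    mem_span_of_inner h1 h2
  have hspan2 : gradu x - v x ∈ Submodule.span ℝ (Set.range fun i => ξ i x) :=
    mem_span_of_inner h1' h2
  have hp1 : Submodule.orthogonalProjectionOnto (tangentSpace ξ x) (v x - w x) = 0 :=
    Submodule.orthogonalProjectionOnto_eq_zero_iff.mpr
      (Submodule.le_orthogonal_orthogonal _ hspan1)
  have hp2 : Submodule.orthogonalProjectionOnto (tangentSpace ξ x) (gradu x - v x) = 0 :=
    Submodule.orthogonalProjectionOnto_eq_zero_iff.mpr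
      (Submodule.le_orthogonal_orthogonal _ hspan2)
  have hT : gradu x ∈ tangentSpace ξ x := by
    rw [tangentSpace, Submodule.mem_orthogonal]
    intro y hy
    induction hy using Submodule.span_induction with
    | mem y hy => obtain ⟨j, rfl⟩ := hy; exact h3 j
    | zero => simp
    | add a b _ _ iha ihb => rw [inner_add_left, iha, ihb, add_zero]
    | smul c a _ iha => rw [real_inner_smul_left, iha, mul_zero]
  rw [map_sub] at hp1 hp2
  have e1 : Submodule.orthogonalProjectionOnto (tangentSpace ξ x) (v x)
      = Submodule.orthogonalProjectionOnto (tangentSpace ξ x) (w x) := by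
    rwa [sub_eq_zero] at hp1
  have e2 : Submodule.orthogonalProjectionOnto (tangentSpace ξ x) (gradu x)
      = Submodule.orthogonalProjectionOnto (tangentSpace ξ x) (v x) := by
    rwa [sub_eq_zero] at hp2
  refine ⟨congrArg _ e1, ?_⟩
  rw [← e2]
  exact Submodule.starProjection_eq_self_iff.mpr hT
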